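/- Inequality-based pruning (Theorem 3 of the paper): assume h : {1,…,n} → ℝ is nonnegative and nondecreasing, and set K = 2β + h(1) + h(n). Let 1 ≤ t < n and τ ∈ T_t. If inf_{φ∈ℝ} f_τ^t(φ) > inf_{φ'∈ℝ} f^t(φ') + K, then for every integer T with t < T ≤ n and every φ ∈ ℝ one has f_τ^T(φ) > f^T(φ), where τ is viewed as an element of T_T; in particular the changepoint vector τ can never be optimal for the data y_{1:T}. -/

import Mathlib

open Finset

/-- Segment cost `C(s,t,φ,ψ)`: cost of fitting data `y_{s+1:t}` with a linear
function taking value `φ` at time `s` and value `ψ` at time `t`. -/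
noncomputable def segCost (y : ℕ → ℝ) (σ : ℝ) (s t : ℕ) (φ ψ : ℝ) : ℝ :=
  (1 / σ ^ 2) * ∑ j ∈ Finset.Icc (s + 1) t,
    (y j - φ - ((ψ - φ) / ((t : ℝ) - (s : ℝ))) * ((j : ℝ) - (s : ℝ))) ^ 2

/-- `ValidCP t τ` : `τ` is a (possibly empty) strictly increasing vector of
changepoints `0 < τ₁ < ⋯ < τ_k < t`, i.e. an element of `T_t`. -/
def ValidCP (t : ℕ) (τ : List ℕ) : Prop :=
  τ.Chain' (· < ·) ∧ ∀ x ∈ τ, 0 < x ∧ x < t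

/-- Penalised cost of segmenting `y_{1:t}` with changepoints `τ = (τ₁,…,τ_k)`,
fitted values `φs 0, …, φs k` at times `0, τ₁, …, τ_k`, and fitted value `φ` at time `t`. -/
noncomputable def segTotal (y : ℕ → ℝ) (σ β : ℝ) (h : ℕ → ℝ) (t : ℕ)
    (τ : List ℕ) (φs : ℕ → ℝ) (φ : ℝ) : ℝ :=
  let p : ℕ → ℕ := fun i => (0 :: τ).getD i 0
  (∑ i ∈ Finset.range τ.length,
      (segCost y σ (p i) (p (i + 1)) (φs i) (φs (i + 1)) + h (p (i + 1) - p i)))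
    + segCost y σ (p τ.length) t (φs τ.length) φ + h (t - p τ.length)
    + β * ((τ.length : ℝ) + 1)

/-- `f_τ^t(φ)` : minimum penalised cost of segmenting `y_{1:t}` with changepoints `τ`
and fitted value `φ` at time `t`, minimised over the fitted values at the changepoints. -/
noncomputable def fseg (y : ℕ → ℝ) (σ β : ℝ) (h : ℕ → ℝ) (t : ℕ)
    (τ : List ℕ) (φ : ℝ) : ℝ :=
  ⨅ φs : ℕ → ℝ, segTotal y σ β h t τ φs φ

/-- `f^t(φ)` : minimum penalised cost of segmenting `y_{1:t}` with fitted value `φ`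
at time `t`, minimised over all changepoint vectors in `T_t`; `f^0 ≡ 0`. -/
noncomputable def fDP (y : ℕ → ℝ) (σ β : ℝ) (h : ℕ → ℝ) (t : ℕ) (φ : ℝ) : ℝ :=
  if t = 0 then 0 else ⨅ τ : {τ : List ℕ // ValidCP t τ}, fseg y σ β h t τ.1 φ


/-!
Lower bound: in a segmentation of `y_{1:T}` whose changepoints `τ` all lie before `t`, cut the
last segment at `t`, fitting there the value of its line. The cost is unchanged, and `h` being
nondecreasing, `f_τ^T(φ) ≥ inf f_τ^t + inf_ξ C(t, T, ξ, φ)`.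

Upper bound: extend any segmentation of `y_{1:t}` by the changepoints `t` and `t + 1` (only `t`
when `T = t + 1`). The cost of the unit segment `(t, t + 1]` does not depend on its left value,
so the jump there is free, and the new penalties are at most `2β + h(1) + h(n)`; hence
`f^T(φ) ≤ inf f^t + inf_ξ C(t, T, ξ, φ) + K`, and the hypothesis separates the two bounds.
-/

section SegmentCost

variable (y : ℕ → ℝ) (σ : ℝ)

lemma segCost_nonneg (s t : ℕ) (φ ψ : ℝ) : 0 ≤ segCost y σ s t φ ψ :=
  mul_nonneg (by positivity) (sum_nonneg fun _ _ => sq_nonneg _)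

lemma segCost_succ (t : ℕ) (φ ψ : ℝ) :
    segCost y σ t (t + 1) φ ψ = 1 / σ ^ 2 * (y (t + 1) - ψ) ^ 2 := by
  simp only [segCost, Icc_self, sum_singleton]
  push_cast
  ring_nf

lemma segCost_split {s t T : ℕ} (hst : s < t) (htT : t < T) (a b : ℝ) :
    segCost y σ s T a b =
      segCost y σ s t a (a + (b - a) * ((t - s : ℝ) / (T - s))) +
        segCost y σ t T (a + (b - a) * ((t - s : ℝ) / (T - s))) b := by
  have hst' : (s : ℝ) < t := by exact_mod_cast hst
  have htT' : (t : ℝ) < T := by exact_mod_cast htT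
  simp only [segCost, ← mul_add]
  rw [Icc_add_one_left_eq_Ioc, Icc_add_one_left_eq_Ioc, Icc_add_one_left_eq_Ioc,
    ← sum_Ioc_consecutive _ hst.le htT.le]
  congr 1
  congr 1 <;> refine sum_congr rfl fun j _ => ?_ <;> congr 1 <;>
    field_simp [sub_ne_zero.mpr hst'.ne', sub_ne_zero.mpr htT'.ne',
      sub_ne_zero.mpr (hst'.trans htT').ne'] <;> ring

end SegmentCost

namespace ValidCP

variable {t : ℕ} {τ : List ℕ}

lemma isChain_zero_cons (hτ : ValidCP t τ) : (0 :: τ).IsChain (· < ·) := by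
  cases τ with
  | nil => exact List.IsChain.singleton _
  | cons a l => exact List.isChain_cons_cons.mpr ⟨(hτ.2 a (by simp)).1, hτ.1⟩

lemma getD_lt_getD_succ (hτ : ValidCP t τ) {i : ℕ} (hi : i < τ.length) :
    (0 :: τ).getD i 0 < (0 :: τ).getD (i + 1) 0 := by
  rw [List.getD_eq_getElem _ _ (by simp; omega), List.getD_eq_getElem _ _ (by simp; omega)]
  exact List.isChain_iff_getElem.mp hτ.isChain_zero_cons i (by simp; omega)

lemma getD_lt (hτ : ValidCP t τ) (ht : 0 < t) (i : ℕ) : (0 :: τ).getD i 0 < t := by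
  cases i with
  | zero => exact ht
  | succ i =>
    rw [List.getD_cons_succ]
    by_cases hi : i < τ.length
    · rw [List.getD_eq_getElem _ _ hi]
      exact (hτ.2 _ (List.getElem_mem hi)).2
    · rwa [List.getD_eq_default _ _ (by omega)]

lemma append_singleton (hτ : ValidCP t τ) (ht : 0 < t) {T : ℕ} (hT : t < T) :
    ValidCP T (τ ++ [t]) := by
  refine ⟨hτ.1.append (List.isChain_singleton _) ?_, ?_⟩
  · intro x hx u hu
    obtain ⟨hne, rfl⟩ := List.mem_getLast?_eq_getLast hx
    obtain rfl : t = u := by simpa using hu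
    exact (hτ.2 _ (List.getLast_mem hne)).2
  · intro x hx
    rcases List.mem_append.mp hx with hx | hx
    · exact ⟨(hτ.2 x hx).1, (hτ.2 x hx).2.trans hT⟩
    · obtain rfl := List.mem_singleton.mp hx
      exact ⟨ht, hT⟩

end ValidCP

section Segmentation

variable (y : ℕ → ℝ) (σ β : ℝ) (h : ℕ → ℝ)

lemma segTotal_nonneg (hβ : 0 ≤ β) {t : ℕ} (ht : 0 < t) (hpos : ∀ i, 1 ≤ i → i ≤ t → 0 ≤ h i)
    {τ : List ℕ} (hτ : ValidCP t τ) (φs : ℕ → ℝ) (φ : ℝ) :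
    0 ≤ segTotal y σ β h t τ φs φ := by
  have hlast := hτ.getD_lt ht τ.length
  simp only [segTotal]
  refine add_nonneg (add_nonneg (add_nonneg (sum_nonneg fun i hi => ?_) ?_) ?_) (by positivity)
  · have := hτ.getD_lt_getD_succ (mem_range.mp hi)
    have := hτ.getD_lt ht (i + 1)
    exact add_nonneg (segCost_nonneg ..) (hpos _ (by omega) (by omega))
  · exact segCost_nonneg ..
  · exact hpos _ (by omega) (by omega)

lemma segTotal_append_singleton (T s : ℕ) (τ : List ℕ) (φs : ℕ → ℝ) (v φ : ℝ) :
    segTotal y σ β h T (τ ++ [s]) (Function.update φs (τ.length + 1) v) φ =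
      segTotal y σ β h s τ φs v + segCost y σ s T v φ + h (T - s) + β := by
  have hp : ∀ i ≤ τ.length, (0 :: (τ ++ [s])).getD i 0 = (0 :: τ).getD i 0 := fun i hi => by
    rw [← List.cons_append, List.getD_append _ _ _ _ (by simp; omega)]
  have hs : (0 :: (τ ++ [s])).getD (τ.length + 1) 0 = s := by
    rw [← List.cons_append, List.getD_append_right _ _ _ _ (by simp)]
    simp
  have hφ : ∀ i ≤ τ.length, Function.update φs (τ.length + 1) v i = φs i := fun i hi =>
    Function.update_of_ne (by omega) _ _
  simp only [segTotal, List.length_append, List.length_singleton, sum_range_succ, hs,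
    hp _ le_rfl, hφ _ le_rfl, Function.update_self]
  rw [sum_congr rfl fun i hi => by
    have hi := mem_range.mp hi
    rw [hp i (by omega), hp (i + 1) (by omega), hφ i (by omega), hφ (i + 1) (by omega)]]
  push_cast
  ring

lemma fDP_of_pos {t : ℕ} (ht : 0 < t) (φ : ℝ) :
    fDP y σ β h t φ = ⨅ τ : {τ // ValidCP t τ}, fseg y σ β h t τ.1 φ :=
  if_neg ht.ne'

variable {β h} (hβ : 0 ≤ β) {t : ℕ} (ht : 0 < t) (hpos : ∀ i, 1 ≤ i → i ≤ t → 0 ≤ h i)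
  {τ : List ℕ} (hτ : ValidCP t τ)
include hβ ht hpos hτ

lemma fseg_nonneg (φ : ℝ) : 0 ≤ fseg y σ β h t τ φ :=
  Real.iInf_nonneg fun φs => segTotal_nonneg y σ β h hβ ht hpos hτ φs φ

lemma fseg_le_segTotal (φs : ℕ → ℝ) (φ : ℝ) : fseg y σ β h t τ φ ≤ segTotal y σ β h t τ φs φ :=
  ciInf_le ⟨0, Set.forall_mem_range.mpr fun φs' => segTotal_nonneg y σ β h hβ ht hpos hτ φs' φ⟩ φs

lemma iInf_fseg_le (φ : ℝ) : ⨅ ψ, fseg y σ β h t τ ψ ≤ fseg y σ β h t τ φ :=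
  ciInf_le ⟨0, Set.forall_mem_range.mpr (fseg_nonneg y σ hβ ht hpos hτ)⟩ φ

lemma fDP_le_fseg (φ : ℝ) : fDP y σ β h t φ ≤ fseg y σ β h t τ φ := by
  rw [fDP_of_pos y σ β h ht]
  have hbdd : BddBelow (Set.range fun τ' : {τ' // ValidCP t τ'} => fseg y σ β h t τ'.1 φ) :=
    ⟨0, Set.forall_mem_range.mpr fun τ' => fseg_nonneg y σ hβ ht hpos τ'.2 φ⟩
  exact ciInf_le hbdd ⟨τ, hτ⟩

lemma iInf_fseg_add_iInf_segCost_le_fseg {T : ℕ} (htT : t < T)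
    (hmono : ∀ i j, 1 ≤ i → i ≤ j → j ≤ T → h i ≤ h j) (φ : ℝ) :
    (⨅ ψ, fseg y σ β h t τ ψ) + (⨅ ξ, segCost y σ t T ξ φ) ≤ fseg y σ β h T τ φ := by
  refine le_ciInf fun φs => ?_
  set s := (0 :: τ).getD τ.length 0
  have hs : s < t := hτ.getD_lt ht τ.length
  set m := φs τ.length + (φ - φs τ.length) * ((t - s : ℝ) / (T - s))
  have hsplit := segCost_split y σ hs htT (φs τ.length) φ
  have hlast : h (t - s) ≤ h (T - s) := hmono _ _ (by omega) (by omega) (by omega)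
  have hfit := (iInf_fseg_le y σ hβ ht hpos hτ m).trans (fseg_le_segTotal y σ hβ ht hpos hτ φs m)
  have hcut : ⨅ ξ, segCost y σ t T ξ φ ≤ segCost y σ t T m φ :=
    ciInf_le ⟨0, Set.forall_mem_range.mpr fun ξ => segCost_nonneg y σ t T ξ φ⟩ m
  simp only [segTotal] at hfit ⊢
  linarith

end Segmentation

instance (t : ℕ) : Nonempty {τ : List ℕ // ValidCP t τ} := ⟨⟨[], List.IsChain.nil, by simp⟩⟩

section Extension

variable (y : ℕ → ℝ) (σ : ℝ) {β : ℝ} {h : ℕ → ℝ} (hβ : 0 ≤ β) {t T : ℕ} (ht : 0 < t)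
  {τ : List ℕ} (hτ : ValidCP t τ) (φs : ℕ → ℝ) (φ₀ ξ φ : ℝ)
include hβ ht hτ

lemma fDP_succ_le (hpos : ∀ i, 1 ≤ i → i ≤ t + 1 → 0 ≤ h i) :
    fDP y σ β h (t + 1) φ ≤
      segTotal y σ β h t τ φs φ₀ + segCost y σ t (t + 1) ξ φ + h 1 + β := by
  have hτ' := hτ.append_singleton ht (lt_add_one t)
  calc fDP y σ β h (t + 1) φ ≤ fseg y σ β h (t + 1) (τ ++ [t]) φ :=
        fDP_le_fseg y σ hβ t.succ_pos hpos hτ' φ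
    _ ≤ segTotal y σ β h (t + 1) (τ ++ [t]) (Function.update φs (τ.length + 1) φ₀) φ :=
        fseg_le_segTotal y σ hβ t.succ_pos hpos hτ' _ φ
    _ = segTotal y σ β h t τ φs φ₀ + segCost y σ t (t + 1) φ₀ φ + h (t + 1 - t) + β :=
        segTotal_append_singleton ..
    _ = _ := by rw [segCost_succ, segCost_succ, add_tsub_cancel_left]

lemma fDP_le_of_succ_lt (hT : t + 1 < T) (hpos : ∀ i, 1 ≤ i → i ≤ T → 0 ≤ h i) :
    fDP y σ β h T φ ≤
      segTotal y σ β h t τ φs φ₀ + segCost y σ t T ξ φ + h 1 + h (T - (t + 1)) + 2 * β := by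
  -- the value at `t + 1` of the line from `(t, ξ)` to `(T, φ)`
  set ψ := ξ + (φ - ξ) * (((t + 1 : ℕ) - t : ℝ) / (T - t))
  set φs' := Function.update (Function.update φs (τ.length + 1) φ₀) ((τ ++ [t]).length + 1) ψ
  have hτ' := (hτ.append_singleton ht (lt_add_one t)).append_singleton t.succ_pos hT
  calc fDP y σ β h T φ ≤ fseg y σ β h T (τ ++ [t] ++ [t + 1]) φ :=
        fDP_le_fseg y σ hβ (by omega) hpos hτ' φ
    _ ≤ segTotal y σ β h T (τ ++ [t] ++ [t + 1]) φs' φ :=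
        fseg_le_segTotal y σ hβ (by omega) hpos hτ' _ φ
    _ = segTotal y σ β h t τ φs φ₀ + segCost y σ t (t + 1) φ₀ ψ + h (t + 1 - t) + β +
          segCost y σ (t + 1) T ψ φ + h (T - (t + 1)) + β := by
        rw [segTotal_append_singleton, segTotal_append_singleton]
    _ = _ := by
        rw [segCost_split y σ (lt_add_one t) hT ξ φ, segCost_succ, segCost_succ,
          add_tsub_cancel_left]
        ring

end Extension

section Pruning

variable (y : ℕ → ℝ) (σ : ℝ) {β : ℝ} {h : ℕ → ℝ} {n : ℕ} (hβ : 0 ≤ β)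
  (hpos : ∀ i, 1 ≤ i → i ≤ n → 0 ≤ h i) (hmono : ∀ i j, 1 ≤ i → i ≤ j → j ≤ n → h i ≤ h j)
  {t T : ℕ} (ht : 0 < t) (htT : t < T) (hTn : T ≤ n)
include hβ hpos hmono ht htT hTn

lemma fDP_le_segTotal_add_segCost {τ : List ℕ} (hτ : ValidCP t τ) (φs : ℕ → ℝ) (φ₀ ξ φ : ℝ) :
    fDP y σ β h T φ ≤ segTotal y σ β h t τ φs φ₀ + segCost y σ t T ξ φ + (2 * β + h 1 + h n) := by
  have hposT : ∀ i, 1 ≤ i → i ≤ T → 0 ≤ h i := fun i hi hiT => hpos i hi (hiT.trans hTn)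
  have h1 := hpos 1 le_rfl (by omega)
  have hn := hpos n (by omega) le_rfl
  rcases (Nat.succ_le_of_lt htT).eq_or_lt with rfl | hT
  · linarith [fDP_succ_le y σ hβ ht hτ φs φ₀ ξ φ hposT]
  · linarith [fDP_le_of_succ_lt y σ hβ ht hτ φs φ₀ ξ φ hT hposT,
      hmono (T - (t + 1)) n (by omega) (by omega) le_rfl]

lemma fDP_le_iInf_fDP_add_iInf_segCost (φ : ℝ) :
    fDP y σ β h T φ ≤
      (⨅ φ', fDP y σ β h t φ') + (⨅ ξ, segCost y σ t T ξ φ) + (2 * β + h 1 + h n) := by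
  set K := 2 * β + h 1 + h n
  have hS : ∀ ξ, fDP y σ β h T φ - K - segCost y σ t T ξ φ ≤ ⨅ φ', fDP y σ β h t φ' :=
    fun ξ => le_ciInf fun φ₀ => by
      rw [fDP_of_pos y σ β h ht]
      refine le_ciInf fun τ₀ => le_ciInf fun φs => ?_
      linarith [fDP_le_segTotal_add_segCost y σ hβ hpos hmono ht htT hTn τ₀.2 φs φ₀ ξ φ]
  have hC : fDP y σ β h T φ - K - ⨅ φ', fDP y σ β h t φ' ≤ ⨅ ξ, segCost y σ t T ξ φ :=
    le_ciInf fun ξ => by linarith [hS ξ]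
  linarith

end Pruning

theorem statement10_general (n : ℕ) (y : ℕ → ℝ) (σ : ℝ)
    (β : ℝ) (hβ : 0 < β) (h : ℕ → ℝ)
    (hpos : ∀ i, 1 ≤ i → i ≤ n → 0 ≤ h i)
    (hmono : ∀ i j, 1 ≤ i → i ≤ j → j ≤ n → h i ≤ h j)
    (t : ℕ) (ht1 : 1 ≤ t) (htn : t < n)
    (τ : List ℕ) (hτ : ValidCP t τ)
    (hineq : (⨅ φ' : ℝ, fDP y σ β h t φ') + (2 * β + h 1 + h n)
      < ⨅ φ : ℝ, fseg y σ β h t τ φ) :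
    ∀ T : ℕ, t < T → T ≤ n → ∀ φ : ℝ, fDP y σ β h T φ < fseg y σ β h T τ φ := by
  intro T htT hTn φ
  have hpos_t : ∀ i, 1 ≤ i → i ≤ t → 0 ≤ h i := fun i hi hit => hpos i hi (hit.trans htn.le)
  have hmono_T : ∀ i j, 1 ≤ i → i ≤ j → j ≤ T → h i ≤ h j :=
    fun i j hi hij hjT => hmono i j hi hij (hjT.trans hTn)
  calc fDP y σ β h T φ
      ≤ (⨅ φ', fDP y σ β h t φ') + (⨅ ξ, segCost y σ t T ξ φ) + (2 * β + h 1 + h n) :=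
        fDP_le_iInf_fDP_add_iInf_segCost y σ hβ.le hpos hmono ht1 htT hTn φ
    _ < (⨅ ψ, fseg y σ β h t τ ψ) + (⨅ ξ, segCost y σ t T ξ φ) := by linarith
    _ ≤ fseg y σ β h T τ φ :=
        iInf_fseg_add_iInf_segCost_le_fseg y σ hβ.le ht1 hpos_t hτ htT hmono_T φ

/-- Theorem 3 of the paper, inequality-based pruning: if `h` is
nonnegative and nondecreasing, `K = 2β + h(1) + h(n)`, and
`inf_φ f_τ^t(φ) > inf_{φ'} f^t(φ') + K`, then for every `T` with `t < T ≤ n` and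
every `φ`, `f_τ^T(φ) > f^T(φ)`: the vector `τ` can never be optimal for `y_{1:T}`. -/
theorem statement10 (n : ℕ) (hn : 1 ≤ n) (y : ℕ → ℝ) (σ : ℝ) (hσ : 0 < σ)
    (β : ℝ) (hβ : 0 < β) (h : ℕ → ℝ)
    (hpos : ∀ i, 1 ≤ i → i ≤ n → 0 ≤ h i)
    (hmono : ∀ i j, 1 ≤ i → i ≤ j → j ≤ n → h i ≤ h j)
    (t : ℕ) (ht1 : 1 ≤ t) (htn : t < n)
    (τ : List ℕ) (hτ : ValidCP t τ)
    (hineq : (⨅ φ' : ℝ, fDP y σ β h t φ') + (2 * β + h 1 + h n)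
      < ⨅ φ : ℝ, fseg y σ β h t τ φ) :
    ∀ T : ℕ, t < T → T ≤ n → ∀ φ : ℝ, fDP y σ β h T φ < fseg y σ β h T τ φ :=
  statement10_general n y σ β hβ h hpos hmono t ht1 htn τ hτ hineq
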